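/- The polynomial h = f(x) + g(y) + (x₂²-y₂²)² ∈ ℚ[x₀,...,x₃,y₀,...,y₃] is a sum of squares of polynomials with coefficients in ℚ(∛2). -/
import Mathlib


open MvPolynomial

/-- The polynomial h = f(x) + g(y) + (x₂² - y₂²)² in ℚ-coefficients, viewed in
ℝ[x₀,…,x₃,y₀,…,y₃] with variables X 0,…,X 3 (the xᵢ) and X 4,…,X 7 (the yᵢ). -/
noncomputable def hPoly : MvPolynomial (Fin 8) ℝ :=
  (40 * X 0^4 + 8 * X 0^2 * X 1^2 + 32 * X 0^2 * X 1 * X 2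
    + 64 * X 0^2 * X 1 * X 3 + 16 * X 0^2 * X 2^2 + 16 * X 0^2 * X 2 * X 3
    + 32 * X 0^2 * X 3^2 + 2 * X 1^4 + 8 * X 1^2 * X 2^2 + 8 * X 1^2 * X 2 * X 3
    + 16 * X 1 * X 2 * X 3^2 + 8 * X 2^2 * X 3^2 + 8 * X 3^4)
  + ((X 4^2 - X 7^2)^2 + (X 5^2 - X 7^2)^2 + (X 6^2 - X 7^2)^2
    + (-X 4^2 - X 4 * X 5 - X 4 * X 6 + X 4 * X 7 - X 5 * X 6 + X 5 * X 7
        + X 6 * X 7)^2)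
  + (X 2^2 - X 6^2)^2

/-- The subalgebra of multivariate polynomials all of whose coefficients lie in
a fixed subalgebra `S` of the coefficient ring. -/
noncomputable def coeffIn (S : Subalgebra ℚ ℝ) : Subalgebra ℚ (MvPolynomial (Fin 8) ℝ) where
  carrier := {p | ∀ m, p.coeff m ∈ S}
  add_mem' := by
    intro a b ha hb m
    rw [coeff_add]
    exact S.add_mem (ha m) (hb m)
  mul_mem' := by
    intro a b ha hb m
    rw [coeff_mul]
    exact Subalgebra.sum_mem _ fun x _ => S.mul_mem (ha _) (hb _)
  algebraMap_mem' := by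
    intro r m
    have : (algebraMap ℚ (MvPolynomial (Fin 8) ℝ)) r = C ((r : ℝ)) := rfl
    rw [this, coeff_C]
    split
    · exact S.algebraMap_mem r
    · exact S.zero_mem

theorem X_mem_coeffIn (S : Subalgebra ℚ ℝ) (j : Fin 8) : X j ∈ coeffIn S := by
  intro m
  rw [coeff_X']
  split
  · exact S.one_mem
  · exact S.zero_mem

theorem C_mem_coeffIn (S : Subalgebra ℚ ℝ) (a : ℝ) (ha : a ∈ S) : C a ∈ coeffIn S := by
  intro m
  rw [coeff_C]
  split
  · exact ha
  · exact S.zero_mem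

set_option maxHeartbeats 3200000 in
/-- h is a sum of squares of polynomials with coefficients in
ℚ(∛2). -/
theorem h_is_sos_over_Q_cbrt2 (α : ℝ) (hα : α ^ 3 = 2) :
    ∃ (k : ℕ) (p : Fin k → MvPolynomial (Fin 8) ℝ),
      hPoly = ∑ i, (p i) ^ 2 ∧
      ∀ (i : Fin k) (m : Fin 8 →₀ ℕ),
        (p i).coeff m ∈ Algebra.adjoin ℚ ({α} : Set ℝ) := by
  set S : Subalgebra ℚ ℝ := Algebra.adjoin ℚ ({α} : Set ℝ) with hS
  set a : MvPolynomial (Fin 8) ℝ := C α with haa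
  refine ⟨10, ![
    (2 - 4 * a^2) * X 0^2 + X 1^2 + 2 * X 2 * X 3,
    (2 - 4 * a^2) * X 0^2 + X 1^2 + 2 * X 2 * X 3,
    (4 - 4 * a) * X 0^2 + 2 * X 3^2 + 2 * X 1 * X 2,
    (4 - 4 * a) * X 0^2 + 2 * X 3^2 + 2 * X 1 * X 2,
    4 * a * X 0 * X 1 + 4 * X 0 * X 2 + 4 * a^2 * X 0 * X 3,
    X 4^2 - X 7^2,
    X 5^2 - X 7^2,
    X 6^2 - X 7^2,
    -X 4^2 - X 4 * X 5 - X 4 * X 6 + X 4 * X 7 - X 5 * X 6 + X 5 * X 7 + X 6 * X 7,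
    X 2^2 - X 6^2], ?_, ?_⟩
  · have ha3 : a ^ 3 = 2 := by
      rw [haa, ← C_pow, hα]
      exact map_ofNat C 2
    rw [hPoly]
    simp only [Fin.sum_univ_succ, Fin.sum_univ_zero, Matrix.cons_val_zero,
      Matrix.cons_val_succ, Fin.succ_zero_eq_one]
    linear_combination (-(32 * a * X 0^4 + 32 * X 0^2 * X 1 * X 3
      + 16 * a * X 0^2 * X 3^2)) * ha3
  · have hαS : α ∈ S := Algebra.self_mem_adjoin_singleton ℚ α
    have haT : a ∈ coeffIn S := C_mem_coeffIn S α hαS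
    have hXT : ∀ j, X j ∈ coeffIn S := X_mem_coeffIn S
    have h2 : (2 : MvPolynomial (Fin 8) ℝ) ∈ coeffIn S := by
      have := (coeffIn S).natCast_mem 2
      simpa using this
    have h4 : (4 : MvPolynomial (Fin 8) ℝ) ∈ coeffIn S := by
      have := (coeffIn S).natCast_mem 4
      simpa using this
    have hA : (2 - 4 * a^2) * X 0^2 + X 1^2 + 2 * X 2 * X 3 ∈ coeffIn S :=
      add_mem (add_mem (mul_mem (sub_mem h2 (mul_mem h4 (pow_mem haT 2)))
        (pow_mem (hXT 0) 2)) (pow_mem (hXT 1) 2))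
        (mul_mem (mul_mem h2 (hXT 2)) (hXT 3))
    have hB : (4 - 4 * a) * X 0^2 + 2 * X 3^2 + 2 * X 1 * X 2 ∈ coeffIn S :=
      add_mem (add_mem (mul_mem (sub_mem h4 (mul_mem h4 haT)) (pow_mem (hXT 0) 2))
        (mul_mem h2 (pow_mem (hXT 3) 2))) (mul_mem (mul_mem h2 (hXT 1)) (hXT 2))
    have hCm : 4 * a * X 0 * X 1 + 4 * X 0 * X 2 + 4 * a^2 * X 0 * X 3 ∈ coeffIn S :=
      add_mem (add_mem (mul_mem (mul_mem (mul_mem h4 haT) (hXT 0)) (hXT 1))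
        (mul_mem (mul_mem h4 (hXT 0)) (hXT 2)))
        (mul_mem (mul_mem (mul_mem h4 (pow_mem haT 2)) (hXT 0)) (hXT 3))
    have hD : ∀ j k : Fin 8, X j^2 - X k^2 ∈ coeffIn S := fun j k =>
      sub_mem (pow_mem (hXT j) 2) (pow_mem (hXT k) 2)
    have hE : -X 4^2 - X 4 * X 5 - X 4 * X 6 + X 4 * X 7 - X 5 * X 6 + X 5 * X 7
        + X 6 * X 7 ∈ coeffIn S :=
      add_mem (add_mem (sub_mem (add_mem (sub_mem (sub_mem
        (neg_mem (pow_mem (hXT 4) 2)) (mul_mem (hXT 4) (hXT 5)))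
        (mul_mem (hXT 4) (hXT 6))) (mul_mem (hXT 4) (hXT 7)))
        (mul_mem (hXT 5) (hXT 6))) (mul_mem (hXT 5) (hXT 7)))
        (mul_mem (hXT 6) (hXT 7))
    have hmm : ∀ q : MvPolynomial (Fin 8) ℝ, q ∈ coeffIn S →
        ∀ m, q.coeff m ∈ S := fun q hq => hq
    intro i m
    apply hmm _ ?_ m
    fin_cases i <;>
      simp only [Matrix.cons_val_zero, Matrix.cons_val_succ] <;>
      first
        | exact hA
        | exact hB
        | exact hCm
        | exact hD 4 7
        | exact hD 5 7
        | exact hD 6 7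
        | exact hD 2 6
        | exact hE
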